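/- arXiv:2605.24331 — 2 statements merged into one kernel-verified Lean document; each statement's English description precedes it below -/
import Mathlib

section
/- Let μ_θ and μ_ref be probability measures on [0,1] with CDFs F_θ and F_ref, where μ_θ has a density f_θ bounded by ‖f_θ‖_∞ < ∞. Let ψ : [0,1] → ℝ be L-Lipschitz. Then |∫ ψ(F_ref(t)) dμ_θ(t) − ∫ ψ(F_θ(t)) dμ_θ(t)| ≤ L · ‖f_θ‖_∞ · W₁(μ_ref, μ_θ), where W₁(μ,ν) = ∫_ℝ |F_μ(t) − F_ν(t)| dt is the 1-Wasserstein distance. -/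
/-!
Lipschitz continuity of `ψ` bounds the difference of the integrands pointwise by
`L |F_ref - F_θ|`, and the density bound gives `μ_θ ≤ M • Lebesgue`, so integrating
`|F_ref - F_θ|` against `μ_θ` costs at most a factor `M` over integrating it in `dt`.
Both CDFs vanish left of `0` and equal `1` from `1` on, so all integrals involved are finite.
-/

open MeasureTheory Set

section Integral

variable {α X E : Type*} [MeasurableSpace α] {μ : Measure α}

lemma LipschitzWith.norm_integral_comp_sub_le [PseudoMetricSpace X] [NormedAddCommGroup E]
    [NormedSpace ℝ E] {L : NNReal} {ψ : X → E} (hψ : LipschitzWith L ψ) {g h : α → X}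
    (hg : Integrable (fun a => ψ (g a)) μ) (hh : Integrable (fun a => ψ (h a)) μ)
    (hgh : Integrable (fun a => dist (g a) (h a)) μ) :
    ‖(∫ a, ψ (g a) ∂μ) - ∫ a, ψ (h a) ∂μ‖ ≤ L * ∫ a, dist (g a) (h a) ∂μ := by
  rw [← integral_sub hg hh, ← integral_const_mul]
  refine (norm_integral_le_integral_norm _).trans <|
    integral_mono (hg.sub hh).norm (hgh.const_mul _) fun a => ?_
  rw [← dist_eq_norm]
  exact hψ.dist_le_mul _ _

lemma Continuous.integrable_comp_of_forall_mem_compact [IsFiniteMeasure μ] [TopologicalSpace X]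
    [NormedAddCommGroup E] {ψ : X → E} (hψ : Continuous ψ) {K : Set X} (hK : IsCompact K)
    {g : α → X} (hg : AEStronglyMeasurable g μ) (hgK : ∀ a, g a ∈ K) :
    Integrable (fun a => ψ (g a)) μ := by
  obtain ⟨C, hC⟩ := hK.exists_bound_of_continuousOn hψ.continuousOn
  exact .of_bound (hψ.comp_aestronglyMeasurable hg) C (.of_forall fun a => hC _ (hgK a))

lemma withDensity_le_ofReal_smul {ν : Measure α} {f : α → NNReal} {M : ℝ}
    (hM : ∀ a, (f a : ℝ) ≤ M) : ν.withDensity (fun a => f a) ≤ ENNReal.ofReal M • ν := by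
  rw [← withDensity_const]
  refine withDensity_mono (.of_forall fun a => ?_)
  simpa only [ENNReal.ofReal_coe_nnreal] using ENNReal.ofReal_le_ofReal (hM a)

lemma integral_le_mul_integral_of_le_ofReal_smul {ν : Measure α} {c : ℝ} (hc : 0 ≤ c)
    (hμν : μ ≤ ENNReal.ofReal c • ν) {g : α → ℝ} (hg0 : 0 ≤ g) (hg : Integrable g ν) :
    ∫ a, g a ∂μ ≤ c * ∫ a, g a ∂ν := by
  calc ∫ a, g a ∂μ ≤ ∫ a, g a ∂(ENNReal.ofReal c • ν) :=
        integral_mono_measure hμν (.of_forall hg0) (hg.smul_measure ENNReal.ofReal_ne_top)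
    _ = c * ∫ a, g a ∂ν := by
        rw [integral_smul_measure, ENNReal.toReal_ofReal hc, smul_eq_mul]

end Integral

section MeasureIcc

variable (μ : Measure ℝ) {a : ℝ}

lemma measurable_measure_Icc_toReal [IsFiniteMeasure μ] :
    Measurable fun t => (μ (Icc a t)).toReal :=
  Monotone.measurable fun _ _ hst =>
    ENNReal.toReal_mono (measure_ne_top _ _) (measure_mono (Icc_subset_Icc_right hst))

variable [IsProbabilityMeasure μ]

lemma measure_Icc_toReal_mem_Icc (t : ℝ) : (μ (Icc a t)).toReal ∈ Icc (0 : ℝ) 1 :=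
  ⟨measureReal_nonneg, measureReal_le_one⟩

lemma measure_Icc_eq_one_of_le {b t : ℝ} (hμ : μ (Icc a b)ᶜ = 0) (ht : b ≤ t) :
    μ (Icc a t) = 1 :=
  le_antisymm prob_le_one <| ((prob_compl_eq_zero_iff measurableSet_Icc).1 hμ).symm.le.trans
    (measure_mono (Icc_subset_Icc_right ht))

end MeasureIcc

lemma integrable_abs_sub_measure_Icc_toReal (μ ν : Measure ℝ) [IsProbabilityMeasure μ]
    [IsProbabilityMeasure ν] {a b : ℝ} (hμ : μ (Icc a b)ᶜ = 0) (hν : ν (Icc a b)ᶜ = 0) :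
    Integrable fun t => |(μ (Icc a t)).toReal - (ν (Icc a t)).toReal| := by
  have hmeas : Measurable fun t => |(μ (Icc a t)).toReal - (ν (Icc a t)).toReal| :=
    ((measurable_measure_Icc_toReal μ).sub (measurable_measure_Icc_toReal ν)).abs
  have hon : IntegrableOn (fun t => |(μ (Icc a t)).toReal - (ν (Icc a t)).toReal|) (Icc a b) :=
    .of_bound measure_Icc_lt_top hmeas.aestronglyMeasurable 1 <| .of_forall fun t => by
      have hμt := measure_Icc_toReal_mem_Icc μ (a := a) t
      have hνt := measure_Icc_toReal_mem_Icc ν (a := a) t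
      rw [Real.norm_eq_abs, abs_abs, abs_le]
      constructor <;> linarith [hμt.1, hμt.2, hνt.1, hνt.2]
  refine hon.integrable_of_forall_notMem_eq_zero fun t ht => ?_
  rcases lt_or_ge t a with hta | hat
  · simp [Icc_eq_empty_of_lt hta]
  · have hbt : b ≤ t := le_of_lt (by simpa [hat] using ht)
    simp [measure_Icc_eq_one_of_le μ hμ hbt, measure_Icc_eq_one_of_le ν hν hbt]

theorem stmt5 (μθ μref : Measure ℝ) [IsProbabilityMeasure μθ] [IsProbabilityMeasure μref]
    (hθs : μθ (Set.Icc (0:ℝ) 1)ᶜ = 0) (hrs : μref (Set.Icc (0:ℝ) 1)ᶜ = 0)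
    (f : ℝ → NNReal) (hdens : μθ = volume.withDensity (fun t => (f t : ENNReal)))
    (M : ℝ) (hM : ∀ t, (f t : ℝ) ≤ M)
    (L : NNReal) (ψ : ℝ → ℝ) (hψ : LipschitzWith L ψ) :
    |(∫ t, ψ ((μref (Set.Icc 0 t)).toReal) ∂μθ) -
        ∫ t, ψ ((μθ (Set.Icc 0 t)).toReal) ∂μθ|
      ≤ L * M * ∫ t, |(μref (Set.Icc 0 t)).toReal - (μθ (Set.Icc 0 t)).toReal| := by
  have hψF (μ : Measure ℝ) [IsProbabilityMeasure μ] :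
      Integrable (fun t => ψ ((μ (Icc 0 t)).toReal)) μθ :=
    hψ.continuous.integrable_comp_of_forall_mem_compact isCompact_Icc
      (measurable_measure_Icc_toReal μ).aestronglyMeasurable (measure_Icc_toReal_mem_Icc μ)
  have hM0 : 0 ≤ M := (f 0).coe_nonneg.trans (hM 0)
  have hle : μθ ≤ ENNReal.ofReal M • volume := hdens ▸ withDensity_le_ofReal_smul hM
  have hD := integrable_abs_sub_measure_Icc_toReal μref μθ hrs hθs
  calc _ ≤ L * ∫ t, |(μref (Icc 0 t)).toReal - (μθ (Icc 0 t)).toReal| ∂μθ := by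
        simpa only [Real.norm_eq_abs, Real.dist_eq] using
          hψ.norm_integral_comp_sub_le (hψF μref) (hψF μθ)
            (by simpa only [Real.dist_eq] using
              (hD.smul_measure ENNReal.ofReal_ne_top).mono_measure hle)
    _ ≤ L * (M * ∫ t, |(μref (Icc 0 t)).toReal - (μθ (Icc 0 t)).toReal|) := by
        gcongr
        exact integral_le_mul_integral_of_le_ofReal_smul hM0 hle (fun t => abs_nonneg _) hD
    _ = _ := by ring
end

section
/- Let ψ : [0,1] → ℝ be strictly increasing and continuous, and let F : [0,1] → [0,1] be a continuous CDF with F(1) = 1 and density f. If ψ'(p) = ψ'(F(p))·f(p) for all p ∈ (0,1), then F(p) = p for all p ∈ [0,1]. Conversely, if F(p) = p then the identity holds. -/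
/-! If the identity holds, `ψ ∘ F` and `ψ` have the same derivative on `(0, 1)`, so `ψ ∘ F - ψ`
is constant on `[0, 1]`; it vanishes at `1` because `F 1 = 1`, and injectivity of `ψ` then
forces `F p = p`. -/

open Set

theorem eq_right_of_hasDerivAt_zero {g : ℝ → ℝ} {a b : ℝ} (hg : ContinuousOn g (Icc a b))
    (hg' : ∀ x ∈ Ioo a b, HasDerivAt g 0 x) : ∀ x ∈ Icc a b, g x = g b := by
  intro x hx
  rcases hx.2.eq_or_lt with rfl | hxb
  · rfl
  obtain ⟨c, -, hslope⟩ := exists_hasDerivAt_eq_slope g (fun _ => 0) hxb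
    (hg.mono (Icc_subset_Icc_left hx.1)) fun y hy => hg' y ⟨hx.1.trans_lt hy.1, hy.2⟩
  have hgb : g b - g x = 0 := by
    rcases div_eq_zero_iff.mp hslope.symm with h | h
    · exact h
    · exact absurd (sub_eq_zero.mp h) hxb.ne'
  linarith

theorem hasDerivAt_comp_sub_zero_of_deriv_eq {ψ F : ℝ → ℝ} {f' p : ℝ}
    (hψF : DifferentiableAt ℝ ψ (F p)) (hψ : DifferentiableAt ℝ ψ p) (hF : HasDerivAt F f' p)
    (h : deriv ψ p = deriv ψ (F p) * f') : HasDerivAt (fun x => ψ (F x) - ψ x) 0 p := by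
  have hdiff := (hψF.hasDerivAt.comp p hF).sub hψ.hasDerivAt
  rwa [← h, sub_self] at hdiff

theorem stmt11_general (ψ F f : ℝ → ℝ)
    (hψ_mono : StrictMonoOn ψ (Set.Icc 0 1))
    (hψ_diff : ∀ t ∈ Set.Icc (0:ℝ) 1, DifferentiableAt ℝ ψ t)
    (hF_cont : ContinuousOn F (Set.Icc 0 1))
    (hF_map : ∀ p ∈ Set.Icc (0:ℝ) 1, F p ∈ Set.Icc (0:ℝ) 1)
    (hF1 : F 1 = 1)
    (hF_deriv : ∀ p ∈ Set.Ioo (0:ℝ) 1, HasDerivAt F (f p) p) :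
    (∀ p ∈ Set.Ioo (0:ℝ) 1, deriv ψ p = deriv ψ (F p) * f p) ↔
      (∀ p ∈ Set.Icc (0:ℝ) 1, F p = p) := by
  constructor
  · intro h p hp
    have hψ_cont : ContinuousOn ψ (Icc 0 1) := fun t ht =>
      (hψ_diff t ht).continuousAt.continuousWithinAt
    have hderiv : ∀ x ∈ Ioo (0:ℝ) 1, HasDerivAt (fun x => ψ (F x) - ψ x) 0 x := fun x hx =>
      hasDerivAt_comp_sub_zero_of_deriv_eq (hψ_diff _ (hF_map x (Ioo_subset_Icc_self hx)))
        (hψ_diff x (Ioo_subset_Icc_self hx)) (hF_deriv x hx) (h x hx)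
    have hconst : ψ (F p) - ψ p = ψ (F 1) - ψ 1 :=
      eq_right_of_hasDerivAt_zero ((hψ_cont.comp hF_cont hF_map).sub hψ_cont) hderiv p hp
    rw [hF1, sub_self, sub_eq_zero] at hconst
    exact hψ_mono.injOn (hF_map p hp) hp hconst
  · intro h p hp
    have hF_id : F =ᶠ[nhds p] id :=
      Filter.eventually_of_mem (Ioo_mem_nhds hp.1 hp.2) fun x hx => h x (Ioo_subset_Icc_self hx)
    have hf_one : f p = 1 := (hF_deriv p hp).unique ((hasDerivAt_id p).congr_of_eventuallyEq hF_id)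
    rw [h p (Ioo_subset_Icc_self hp), hf_one, mul_one]

theorem stmt11 (ψ F f : ℝ → ℝ)
    (hψ_mono : StrictMonoOn ψ (Set.Icc 0 1))
    (hψ_cont : ContinuousOn ψ (Set.Icc 0 1))
    (hψ_diff : ∀ t ∈ Set.Icc (0:ℝ) 1, DifferentiableAt ℝ ψ t)
    (hF_cont : ContinuousOn F (Set.Icc 0 1))
    (hF_map : ∀ p ∈ Set.Icc (0:ℝ) 1, F p ∈ Set.Icc (0:ℝ) 1)
    (hF1 : F 1 = 1)
    (hF_deriv : ∀ p ∈ Set.Ioo (0:ℝ) 1, HasDerivAt F (f p) p) :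
    (∀ p ∈ Set.Ioo (0:ℝ) 1, deriv ψ p = deriv ψ (F p) * f p) ↔
      (∀ p ∈ Set.Icc (0:ℝ) 1, F p = p) :=
  stmt11_general ψ F f hψ_mono hψ_diff hF_cont hF_map hF1 hF_deriv
end
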